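/- arXiv:2206.07193 — 3 statements merged into one kernel-verified Lean document; each statement's English description precedes it below -/
import Mathlib

section
/- Let A₀ be a finite-dimensional commutative unital ℝ-algebra of dimension n, with an ℝ-linear functional ε : A₀ → ℝ such that the bilinear form β(x, y) = ε(x * y) is positive definite (β(x, x) > 0 for all x ≠ 0). Then there exists a basis e₁, …, eₙ of A₀ such that eᵢ * eⱼ = 0 for i ≠ j, eᵢ * eᵢ = eᵢ for all i, and ε(eᵢ) > 0 for all i. In other words, A₀ is the product of n one-dimensional positive real Frobenius algebras. -/
/-- Let `A₀` be a finite-dimensional commutative unital ℝ-algebra of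
dimension `n` with ℝ-linear functional `ε` such that `β x y = ε (x * y)` is
positive definite.  Then `A₀` has a basis `e₁, …, eₙ` of orthogonal idempotents
(`eᵢ * eⱼ = 0` for `i ≠ j`, `eᵢ * eᵢ = eᵢ`) with `ε (eᵢ) > 0`; i.e. `A₀` is a
product of `n` one-dimensional positive real Frobenius algebras. -/
theorem stmt8 {A₀ : Type*} [CommRing A₀] [Algebra ℝ A₀] [FiniteDimensional ℝ A₀]
    (n : ℕ) (hn : Module.finrank ℝ A₀ = n)
    (ε : A₀ →ₗ[ℝ] ℝ) (hpos : ∀ x : A₀, x ≠ 0 → 0 < ε (x * x)) :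
    ∃ e : Module.Basis (Fin n) ℝ A₀,
      (∀ i j, i ≠ j → e i * e j = 0) ∧ (∀ i, e i * e i = e i) ∧ (∀ i, 0 < ε (e i)) := by
  classical
  letI core : InnerProductSpace.Core ℝ A₀ :=
  { inner := fun x y => ε (x * y)
    conj_inner_symm := fun x y => by simp [mul_comm]
    re_inner_nonneg := fun x => by
      by_cases hx : x = 0
      · simp [hx]
      · exact le_of_lt (by simpa using hpos x hx)
    add_left := fun x y z => by simp [add_mul]
    smul_left := fun x y r => by simp [smul_mul_assoc]
    definite := fun x hx => by
      by_contra h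
      exact (hpos x h).ne' (by simpa using hx) }
  letI : NormedAddCommGroup A₀ := core.toNormedAddCommGroup
  letI : InnerProductSpace ℝ A₀ := InnerProductSpace.ofCore core.toCore
  set T : A₀ → Module.End ℝ A₀ := fun a => LinearMap.mul ℝ A₀ a with hT
  have hsymm : ∀ a, (T a).IsSymmetric := by
    intro a x y
    show ε ((a * x) * y) = ε (x * (a * y))
    ring_nf
  have hcomm : Pairwise (Function.onFun Commute T) := by
    intro a b _
    ext x
    show a * (b * x) = b * (a * x)
    ring
  set W : (A₀ → ℝ) → Submodule ℝ A₀ :=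
    fun χ => ⨅ a, Module.End.eigenspace (T a) (χ a) with hW
  have hInt : DirectSum.IsInternal W :=
    LinearMap.IsSymmetric.LinearMap.IsSymmetric.directSum_isInternal_of_pairwise_commute
      hsymm hcomm
  have hmem : ∀ {χ x}, x ∈ W χ → ∀ a, a * x = χ a • x := by
    intro χ x hx a
    have := (Submodule.mem_iInf _).mp hx a
    rwa [Module.End.mem_eigenspace_iff] at this
  -- key: for x ≠ 0 in W χ, χ x ≠ 0
  have hχne : ∀ {χ x}, x ∈ W χ → x ≠ 0 → χ x ≠ 0 := by
    intro χ x hx hx0 h0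
    have : x * x = 0 := by rw [hmem hx x, h0, zero_smul]
    exact (hpos x hx0).ne' (by rw [this, map_zero])
  -- dimension of each W χ is at most 1
  have hdim : ∀ χ, Module.finrank ℝ (W χ) ≤ 1 := by
    intro χ
    by_cases hb : W χ = ⊥
    · rw [hb]
      simp
    · obtain ⟨x, hx, hx0⟩ := Submodule.exists_mem_ne_zero_of_ne_bot hb
      have hle : W χ ≤ Submodule.span ℝ {x} := by
        intro y hy
        have h1 : x * y = χ x • y := hmem hy x
        have h2 : y * x = χ y • x := hmem hx y
        have h3 : χ x • y = χ y • x := by rw [← h1, mul_comm, h2]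
        have : y = ((χ x)⁻¹ * χ y) • x := by
          rw [mul_smul, ← h3, smul_smul, inv_mul_cancel₀ (hχne hx hx0), one_smul]
        rw [this]
        exact Submodule.smul_mem _ _ (Submodule.mem_span_singleton_self x)
      calc Module.finrank ℝ (W χ) ≤ Module.finrank ℝ (Submodule.span ℝ {x}) :=
            Submodule.finrank_mono hle
        _ = 1 := finrank_span_singleton hx0
  -- orthogonality between distinct joint eigenspaces
  have horth : ∀ {χ ψ x y}, χ ≠ ψ → x ∈ W χ → y ∈ W ψ → x * y = 0 := by
    intro χ ψ x y hne hx hy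
    obtain ⟨a, ha⟩ := Function.ne_iff.mp hne
    have h1 : a * (x * y) = χ a • (x * y) := by
      rw [← mul_assoc, hmem hx a, smul_mul_assoc]
    have h2 : a * (x * y) = ψ a • (x * y) := by
      rw [mul_comm x y, ← mul_assoc, hmem hy a, smul_mul_assoc, mul_comm y x]
    have : (χ a - ψ a) • (x * y) = 0 := by
      rw [sub_smul, ← h1, ← h2, sub_self]
    rcases smul_eq_zero.mp this with h | h
    · exact absurd (sub_eq_zero.mp h) ha
    · exact h
  set b : ∀ χ, Module.Basis (Fin (Module.finrank ℝ (W χ))) ℝ (W χ) :=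
    fun χ => Module.finBasis ℝ (W χ) with hb
  set B := hInt.collectedBasis b with hB
  have hBmem : ∀ i, (B i : A₀) ∈ W i.1 := fun i => hInt.collectedBasis_mem b i
  have hBne : ∀ i, (B i : A₀) ≠ 0 := fun i => B.ne_zero i
  set u : ((χ : A₀ → ℝ) × Fin (Module.finrank ℝ (W χ))) → ℝˣ :=
    fun i => Units.mk0 (i.1 (B i))⁻¹ (inv_ne_zero (hχne (hBmem i) (hBne i))) with hu
  set B' := B.unitsSMul u with hB'
  have hB'apply : ∀ i, B' i = (i.1 (B i))⁻¹ • B i := fun i => B.unitsSMul_apply i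
  -- idempotency
  have P2 : ∀ i, B' i * B' i = B' i := by
    intro i
    have hx := hmem (hBmem i) (B i)
    rw [hB'apply i, smul_mul_assoc, mul_smul_comm, hx, smul_smul, smul_smul,
      mul_assoc, inv_mul_cancel₀ (hχne (hBmem i) (hBne i)), mul_one]
  -- orthogonality
  have P1 : ∀ i j, i ≠ j → B' i * B' j = 0 := by
    intro i j hne
    rcases i with ⟨χ, a⟩
    rcases j with ⟨ψ, c⟩
    by_cases hχψ : χ = ψ
    · subst hχψ
      exfalso
      have hsub : Subsingleton (Fin (Module.finrank ℝ (W χ))) := by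
        apply Fin.subsingleton_iff_le_one.mpr (hdim χ)
      exact hne (by rw [Subsingleton.elim a c])
    · rw [hB'apply, hB'apply, smul_mul_assoc, mul_smul_comm,
        horth hχψ (hBmem ⟨χ, a⟩) (hBmem ⟨ψ, c⟩), smul_zero, smul_zero]
  have P3 : ∀ i, 0 < ε (B' i) := by
    intro i
    have h0 : B' i ≠ 0 := B'.ne_zero i
    have := hpos (B' i) h0
    rwa [P2 i] at this
  -- reindex to Fin n
  let σ : ((χ : A₀ → ℝ) × Fin (Module.finrank ℝ (W χ))) ≃ Fin n :=
    (B'.indexEquiv (Module.finBasis ℝ A₀)).trans (finCongr hn)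
  refine ⟨B'.reindex σ, ?_, ?_, ?_⟩
  · intro i j hij
    rw [Module.Basis.reindex_apply, Module.Basis.reindex_apply]
    exact P1 _ _ (fun h => hij (by simpa using congrArg σ h))
  · intro i
    rw [Module.Basis.reindex_apply]
    exact P2 _
  · intro i
    rw [Module.Basis.reindex_apply]
    exact P3 _
end

section
/- Let A₀ be a finite-dimensional commutative unital ℝ-algebra of dimension n, with an ℝ-linear functional ε : A₀ → ℝ such that the bilinear form β(x, y) = ε(x * y) is positive definite. Then there exist positive real numbers w₁, …, wₙ and an ℝ-algebra isomorphism Φ : A₀ ≃ (Fin n → ℝ) (the product algebra with pointwise operations) such that ε(x) = Σᵢ wᵢ · Φ(x)ᵢ for all x ∈ A₀. -/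
/-!
Positivity of `ε (x * x)` rules out nonzero nilpotents, so the finite-dimensional algebra is a
reduced Artinian ring, hence the product of its residue fields; each is a finite extension of `ℝ`,
so `ℝ` or `ℂ`. A factor `ℂ` is impossible: putting `i` resp. `1` in that slot gives `z, u` with
`z * z + u * u = 0`, while `ε (z * z) ≥ 0` and `ε (u * u) > 0`. On `ℝⁿ` a linear functional is
`∑ wᵢ xᵢ` with `wᵢ = ε eᵢ = ε (eᵢ * eᵢ) > 0`.
-/

open Module

def IsPosDefFunctional {A : Type*} [Ring A] [Algebra ℝ A] (ε : A →ₗ[ℝ] ℝ) : Prop :=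
  ∀ x : A, x ≠ 0 → 0 < ε (x * x)

namespace IsPosDefFunctional

variable {A : Type*} [Ring A] [Algebra ℝ A] {ε : A →ₗ[ℝ] ℝ}

theorem isReduced (hε : IsPosDefFunctional ε) : IsReduced A := by
  rw [isReduced_iff_pow_one_lt 2 (by lia)]
  intro x hx
  by_contra hx0
  simpa [← pow_two, hx] using hε x hx0

theorem comp_algEquiv {B : Type*} [Ring B] [Algebra ℝ B]
    (hε : IsPosDefFunctional ε) (e : B ≃ₐ[ℝ] A) :
    IsPosDefFunctional (ε ∘ₗ e.toLinearMap) := fun x hx => by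
  simpa using hε (e x) (by simpa using hx)

theorem mul_self_add_one_ne_zero {ι : Type*} [DecidableEq ι] {R : ι → Type*}
    [∀ i, Ring (R i)] [∀ i, Algebra ℝ (R i)] {ε : (∀ i, R i) →ₗ[ℝ] ℝ}
    (hε : IsPosDefFunctional ε) (i : ι) [Nontrivial (R i)] (y : R i) : y * y + 1 ≠ 0 := by
  intro hy
  have hsum : ε (Pi.single i y * Pi.single i y) + ε (Pi.single i 1 * Pi.single i 1) = 0 := by
    rw [← map_add, ← Pi.single_mul, ← Pi.single_mul, ← Pi.single_add, mul_one, hy,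
      Pi.single_zero, map_zero]
  have hz : 0 ≤ ε (Pi.single i y * Pi.single i y) := by
    by_cases h : (Pi.single i y : ∀ j, R j) = 0
    · simp [h]
    · exact (hε _ h).le
  have hu : 0 < ε (Pi.single i 1 * Pi.single i 1) := hε _ (by simp)
  linarith

theorem exists_pos_weights {ι : Type*} [Fintype ι] {ε : (ι → ℝ) →ₗ[ℝ] ℝ}
    (hε : IsPosDefFunctional ε) : ∃ w : ι → ℝ, (∀ i, 0 < w i) ∧ ∀ x, ε x = ∑ i, w i * x i := by
  classical
  refine ⟨fun i => ε (Pi.single i 1), fun i => ?_, fun x => ?_⟩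
  · simpa [← Pi.single_mul] using hε (Pi.single i 1) (by simp)
  · conv_lhs => rw [pi_eq_sum_univ' x]
    simp [mul_comm]

end IsPosDefFunctional

theorem Real.nonempty_algEquiv_of_mul_self_add_one_ne_zero (F : Type*) [Field F] [Algebra ℝ F]
    [Algebra.IsAlgebraic ℝ F] (h : ∀ y : F, y * y + 1 ≠ 0) : Nonempty (F ≃ₐ[ℝ] ℝ) := by
  refine (Real.nonempty_algEquiv_or F).resolve_right fun ⟨f⟩ => h (f.symm Complex.I) ?_
  rw [← map_mul, Complex.I_mul_I, map_neg, map_one, neg_add_cancel]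

theorem IsPosDefFunctional.nonempty_algEquiv_pi {A : Type*} [CommRing A] [Algebra ℝ A]
    [FiniteDimensional ℝ A] {ε : A →ₗ[ℝ] ℝ} (hε : IsPosDefFunctional ε) :
    Nonempty (A ≃ₐ[ℝ] (Fin (finrank ℝ A) → ℝ)) := by
  classical
  have := hε.isReduced
  have : IsArtinianRing A := IsArtinianRing.of_finite ℝ A
  let e : A ≃ₐ[ℝ] ∀ I : MaximalSpectrum A, A ⧸ I.asIdeal :=
    (IsArtinianRing.equivPi A).restrictScalars ℝ
  have hfactor (I : MaximalSpectrum A) : Nonempty ((A ⧸ I.asIdeal) ≃ₐ[ℝ] ℝ) :=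
    have := I.isMaximal
    letI := Ideal.Quotient.field I.asIdeal
    Real.nonempty_algEquiv_of_mul_self_add_one_ne_zero _
      ((hε.comp_algEquiv e.symm).mul_self_add_one_ne_zero I)
  let e' : A ≃ₐ[ℝ] (MaximalSpectrum A → ℝ) :=
    e.trans (AlgEquiv.piCongrRight fun I => (hfactor I).some)
  have := Fintype.ofFinite (MaximalSpectrum A)
  have hcard : Fintype.card (MaximalSpectrum A) = finrank ℝ A := by
    rw [e'.toLinearEquiv.finrank_eq, Module.finrank_fintype_fun_eq_card]
  exact ⟨e'.trans (AlgEquiv.piCongrLeft' ℝ (fun _ => ℝ) (Fintype.equivFinOfCardEq hcard))⟩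

/-- Let `A₀` be a finite-dimensional commutative unital ℝ-algebra of
dimension `n` with ℝ-linear functional `ε` such that `β x y = ε (x * y)` is
positive definite.  Then there exist positive weights `w₁, …, wₙ` and an ℝ-algebra
isomorphism `Φ : A₀ ≃ (Fin n → ℝ)` (pointwise operations) such that
`ε x = ∑ i, wᵢ * Φ(x)ᵢ`. -/
theorem stmt9 {A₀ : Type*} [CommRing A₀] [Algebra ℝ A₀] [FiniteDimensional ℝ A₀]
    (n : ℕ) (hn : Module.finrank ℝ A₀ = n)
    (ε : A₀ →ₗ[ℝ] ℝ) (hpos : ∀ x : A₀, x ≠ 0 → 0 < ε (x * x)) :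
    ∃ w : Fin n → ℝ, (∀ i, 0 < w i) ∧
      ∃ Φ : A₀ ≃ₐ[ℝ] (Fin n → ℝ), ∀ x : A₀, ε x = ∑ i, w i * Φ x i := by
  subst hn
  obtain ⟨Φ⟩ := IsPosDefFunctional.nonempty_algEquiv_pi hpos
  obtain ⟨w, hw, hεw⟩ := (IsPosDefFunctional.comp_algEquiv hpos Φ.symm).exists_pos_weights
  exact ⟨w, hw, Φ, fun x => by simpa using hεw (Φ x)⟩
end

section
/- Let A be a finite-dimensional commutative unital ℂ-algebra with a conjugate-linear involution J : A → A satisfying J(x * y) = J(x) * J(y), and a ℂ-linear functional ε : A → ℂ satisfying ε(J(x)) = conj(ε(x)) for all x. Set β(x, y) = ε(x * y) and h(x, y) = β(x, J(y)), and suppose h is positive definite: h(x, x) is a positive real number for all x ≠ 0. Then, with n the complex dimension of A, there exists a ℂ-algebra isomorphism Φ : A ≃ (Fin n → ℂ) (the product algebra with pointwise operations) such that Φ(J(x))ᵢ = conj(Φ(x)ᵢ) for all x ∈ A and all i; that is, A is isomorphic as a *-algebra to the algebra of n × n complex diagonal matrices with entrywise complex conjugation. -/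
/-!
Positivity of `ε (x * J x)` forces `x * J x ≠ 0` for `x ≠ 0`. This makes `A` reduced: if `x² = 0`
then `(J x)² = J (x²) = 0`, so `y = x * J x` satisfies
`y * J y = x * (J x)² * J (J x) = 0`, whence `y = 0` and `x = 0`. A reduced finite-dimensional
commutative algebra over the algebraically closed field `ℂ` is `ℂⁿ` (Artin–Wedderburn for
commutative rings). Finally `J` transported to `ℂⁿ` acts coordinatewise: with `e` the `i`-th
minimal idempotent, `e * x = xᵢ e` gives `J e * J x = conj xᵢ • J e`, and the `i`-th coordinate
of `J e` is nonzero because `e * J e ≠ 0`.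
-/

open Module

theorem isReduced_of_mul_map_self_eq_zero {A : Type*} [MonoidWithZero A] (J : A → A)
    (hJ0 : J 0 = 0) (hJmul : ∀ x y, J (x * y) = J x * J y)
    (hJ : ∀ x, x * J x = 0 → x = 0) : IsReduced A := by
  refine (isReduced_iff_pow_one_lt 2 one_lt_two).mpr fun x hx => hJ x (hJ _ ?_)
  have hJx : J x * J x = 0 := by rw [← hJmul, ← sq, hx, hJ0]
  calc x * J x * J (x * J x) = x * (J x * J x) * J (J x) := by rw [hJmul]; simp only [mul_assoc]
    _ = 0 := by rw [hJx, mul_zero, zero_mul]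

theorem exists_algEquiv_pi_of_isReduced (k A : Type*) [Field k] [IsAlgClosed k] [CommRing A]
    [Algebra k A] [FiniteDimensional k A] [IsReduced A] :
    Nonempty (A ≃ₐ[k] (Fin (finrank k A) → k)) := by
  have : IsArtinianRing A := IsArtinianRing.of_finite k A
  have : Fintype (MaximalSpectrum A) := Fintype.ofFinite _
  let residue (I : MaximalSpectrum A) : k ≃ₐ[k] A ⧸ I.asIdeal :=
    letI := Ideal.Quotient.field I.asIdeal
    AlgEquiv.ofBijective (Algebra.ofId k _) IsAlgClosed.algebraMap_bijective_of_isIntegral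
  let Φ : A ≃ₐ[k] (MaximalSpectrum A → k) :=
    ((IsArtinianRing.equivPi A).restrictScalars k).trans
      (AlgEquiv.piCongrRight fun I => (residue I).symm)
  have hcard : Fintype.card (MaximalSpectrum A) = finrank k A := by
    rw [Φ.toLinearEquiv.finrank_eq, finrank_fintype_fun_eq_card]
  exact ⟨Φ.trans (AlgEquiv.piCongrLeft' k (fun _ => k) (Fintype.equivFinOfCardEq hcard))⟩

theorem AlgEquiv.pi_apply_map_eq_of_mul_map_self_eq_zero {k A ι : Type*} [CommRing k] [IsDomain k]
    [CommRing A] [Algebra k A] {σ : k →+* k} (Φ : A ≃ₐ[k] (ι → k)) (J : A →ₛₗ[σ] A)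
    (hJmul : ∀ x y, J (x * y) = J x * J y) (hJ : ∀ x, x * J x = 0 → x = 0) (x : A) (i : ι) :
    Φ (J x) i = σ (Φ x i) := by
  classical
  set e := Φ.symm (Pi.single i 1)
  have hΦe : ∀ y, Φ (e * y) = Pi.single i (Φ y i) := fun y => by
    rw [map_mul, Φ.apply_symm_apply, ← Pi.single_mul_left, one_mul]
  have hex : e * x = Φ x i • e := Φ.injective <| by
    rw [hΦe, map_smul, Φ.apply_symm_apply, ← Pi.single_smul, smul_eq_mul, mul_one]
  have hJe : Φ (J e) i ≠ 0 := by
    intro h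
    have : e * J e = 0 := Φ.injective (by rw [hΦe, h, Pi.single_zero, map_zero])
    simpa [e] using congrArg Φ (hJ e this)
  have hJex := congrFun (congrArg Φ (congrArg J hex)) i
  rw [hJmul, map_mul, LinearMap.map_smulₛₗ, map_smul, Pi.mul_apply, Pi.smul_apply, smul_eq_mul,
    mul_comm] at hJex
  exact mul_right_cancel₀ hJe hJex

theorem stmt13_general {A : Type*} [CommRing A] [Algebra ℂ A] [FiniteDimensional ℂ A]
    (J : A →ₛₗ[starRingEnd ℂ] A)
    (hJmul : ∀ x y : A, J (x * y) = J x * J y)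
    (ε : A →ₗ[ℂ] ℂ)
    (hpos : ∀ x : A, x ≠ 0 → (ε (x * J x)).im = 0 ∧ 0 < (ε (x * J x)).re)
    (n : ℕ) (hn : Module.finrank ℂ A = n) :
    ∃ Φ : A ≃ₐ[ℂ] (Fin n → ℂ), ∀ (x : A) (i : Fin n),
      Φ (J x) i = starRingEnd ℂ (Φ x i) := by
  have hJ : ∀ x, x * J x = 0 → x = 0 := fun x hx => by
    by_contra hx0
    simpa [hx] using (hpos x hx0).2
  have : IsReduced A := isReduced_of_mul_map_self_eq_zero J (map_zero J) hJmul hJ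
  obtain ⟨Φ⟩ := exists_algEquiv_pi_of_isReduced ℂ A
  subst hn
  exact ⟨Φ, Φ.pi_apply_map_eq_of_mul_map_self_eq_zero J hJmul hJ⟩

/-- Let `A` be a finite-dimensional commutative unital ℂ-algebra with
a conjugate-linear involution `J` satisfying `J (x * y) = J x * J y` and a ℂ-linear
functional `ε` with `ε (J x) = conj (ε x)`, such that `h x y = ε (x * J y)` is
positive definite.  Then, with `n = dim_ℂ A`, there is a ℂ-algebra isomorphism
`Φ : A ≃ (Fin n → ℂ)` (pointwise operations) with `Φ (J x) i = conj (Φ x i)`;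
i.e. `A` is *-isomorphic to the complex diagonal `n × n` matrices with entrywise
conjugation. -/
theorem stmt13 {A : Type*} [CommRing A] [Algebra ℂ A] [FiniteDimensional ℂ A]
    (J : A →ₛₗ[starRingEnd ℂ] A) (hJinv : ∀ x : A, J (J x) = x)
    (hJmul : ∀ x y : A, J (x * y) = J x * J y)
    (ε : A →ₗ[ℂ] ℂ) (hJε : ∀ x : A, ε (J x) = starRingEnd ℂ (ε x))
    (hpos : ∀ x : A, x ≠ 0 → (ε (x * J x)).im = 0 ∧ 0 < (ε (x * J x)).re)
    (n : ℕ) (hn : Module.finrank ℂ A = n) :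
    ∃ Φ : A ≃ₐ[ℂ] (Fin n → ℂ), ∀ (x : A) (i : Fin n),
      Φ (J x) i = starRingEnd ℂ (Φ x i) :=
  stmt13_general J hJmul ε hpos n hn
end
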